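/- arXiv:2212.07587 — 2 statements merged into one kernel-verified Lean document; each statement's English description precedes it below -/
import Mathlib

section
/- Under the standing assumption, let (x^{k+1}, ỹ^{k+1}, y^{k+1}) be produced by one SPIDA iteration from (x^k, y^k). Then for every x ∈ X and y ∈ Y: L(x^{k+1}, y) − L(x, ỹ^{k+1}) ≤ γ B_φ(y, y^k) − γ B_φ(y, y^{k+1}) + μ B_ψ(x, x^k) − μ B_ψ(x, x^{k+1}). -/
/-!
Each of the three updates is a Bregman proximal step. Its first-order optimality condition,
combined with the three-point identity
`B(y, w) = B(z, w) + B(y, z) + ⟪∇φ z - ∇φ w, y - z⟫`, yields a three-point inequality.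
Summing these inequalities for `y^{k+1}` (tested at `y`), `x^{k+1}` (tested at `x`) and
`ỹ^{k+1}` (tested at `y^{k+1}`) leaves the coupling term `⟪A (x^{k+1} - x^k), y^{k+1} - ỹ^{k+1}⟫`
and the negative terms `-μ B_ψ(x^{k+1}, x^k) - γ B_φ(y^{k+1}, ỹ^{k+1}) - γ B_φ(ỹ^{k+1}, y^k)`.
The stepsize rule gives `‖A‖² ≤ (ϱμ/L)(ϱγ)`. Strong convexity gives
`L B_ψ ≥ B_φn ≥ ϱ/2 ‖·‖²` and `B_φ ≥ ϱ/2 ‖·‖²`. With Cauchy–Schwarz and Young, these absorb the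
coupling term into the first two negative terms, and the third is nonpositive.
-/

noncomputable section
open scoped RealInnerProductSpace
open Filter

abbrev Euc (d : ℕ) : Type := EuclideanSpace ℝ (Fin d)

/-- Bregman distance associated with kernel `φ` whose gradient map is `φ'`. -/
def Breg {d : ℕ} (φ : Euc d → ℝ) (φ' : Euc d → Euc d) (x y : Euc d) : ℝ :=
  φ x - φ y - ⟪φ' y, x - y⟫

/-- The convex-concave Lagrangian `L(x,y) = f(x) + ⟨Ax, y⟩ − g(y)`. -/
def Lag {n m : ℕ} (f : Euc n → ℝ) (g : Euc m → ℝ) (A : Euc n →L[ℝ] Euc m)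
    (x : Euc n) (y : Euc m) : ℝ := f x + ⟪A x, y⟫ - g y

open Set

section Convexity

variable {E : Type*} [AddCommGroup E] [Module ℝ E] {C : Set E} {h k : E → ℝ} {y z : E}

theorem ConvexOn.apply_add_smul_sub_le (hh : ConvexOn ℝ C h) (hz : z ∈ C) (hy : y ∈ C) {t : ℝ}
    (ht : t ∈ Icc (0 : ℝ) 1) : h (z + t • (y - z)) ≤ h z + t * (h y - h z) := by
  have hcomb : z + t • (y - z) = (1 - t) • z + t • y := by
    rw [smul_sub, sub_smul, one_smul]; abel
  have := hh.2 hz hy (sub_nonneg.2 ht.2) ht.1 (sub_add_cancel 1 t)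
  rw [hcomb]
  simp only [smul_eq_mul] at this
  linarith

theorem IsMinOn.le_add_of_hasLineDerivAt (hmin : IsMinOn (h + k) C z) (hh : ConvexOn ℝ C h)
    (hz : z ∈ C) (hy : y ∈ C) {k' : ℝ} (hk : HasLineDerivAt ℝ k k' z (y - z)) :
    h z ≤ h y + k' := by
  suffices h z - h y ≤ k' by linarith
  refine ge_of_tendsto hk.tendsto_slope_zero_right ?_
  filter_upwards [Ioc_mem_nhdsGT (zero_lt_one' ℝ)] with t ht
  have hmem : z + t • (y - z) ∈ C := hh.1.add_smul_sub_mem hz hy (Ioc_subset_Icc_self ht)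
  have hle : h z + k z ≤ h _ + k _ := hmin hmem
  have hconv := hh.apply_add_smul_sub_le hz hy (Ioc_subset_Icc_self ht)
  rw [smul_eq_mul, le_inv_mul_iff₀ ht.1]
  linarith

theorem ConvexOn.le_sub_of_hasLineDerivAt (hh : ConvexOn ℝ C h) (hz : z ∈ C) (hy : y ∈ C)
    {h' : ℝ} (hd : HasLineDerivAt ℝ h h' z (y - z)) : h' ≤ h y - h z := by
  -- `h + (-h)` is constant, so every point minimizes it.
  have := IsMinOn.le_add_of_hasLineDerivAt (k := fun u => -h u) (fun u _ => by simp) hh hz hy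
    (HasDerivAt.neg hd)
  linarith

end Convexity

section Gradient

variable {F : Type*} [NormedAddCommGroup F] [InnerProductSpace ℝ F] [CompleteSpace F]

theorem HasGradientAt.hasLineDerivAt {f : F → ℝ} {f' x : F} (hf : HasGradientAt f f' x)
    (v : F) : HasLineDerivAt ℝ f ⟪f', v⟫ x v := by
  simpa using (hasGradientAt_iff_hasFDerivAt.mp hf).hasLineDerivAt v

theorem HasGradientAt.const_mul {f : F → ℝ} {f' x : F} (hf : HasGradientAt f f' x) (c : ℝ) :
    HasGradientAt (fun z => c * f z) (c • f') x := by
  rw [hasGradientAt_iff_hasFDerivAt, map_smul]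
  exact (hasGradientAt_iff_hasFDerivAt.mp hf).const_mul c

theorem hasGradientAt_half_mul_sq_norm (ϱ : ℝ) (x : F) :
    HasGradientAt (fun z => ϱ / 2 * ‖z‖ ^ 2) (ϱ • x) x := by
  rw [hasGradientAt_iff_hasFDerivAt]
  refine ((hasStrictFDerivAt_norm_sq x).hasFDerivAt.const_mul (ϱ / 2)).congr_fderiv ?_
  ext v
  simp only [smul_apply, innerSL_apply_apply, smul_eq_mul,
    InnerProductSpace.toDual_apply_apply, real_inner_smul_left]
  ring

end Gradient

section Bregman

variable {d : ℕ} {φ χ : Euc d → ℝ} {φ' χ' : Euc d → Euc d}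

theorem breg_eq_breg_add_breg_add_inner (φ : Euc d → ℝ) (φ' : Euc d → Euc d) (w y z : Euc d) :
    Breg φ φ' y w = Breg φ φ' z w + Breg φ φ' y z + ⟪φ' z - φ' w, y - z⟫ := by
  simp only [Breg, inner_sub_left, inner_sub_right]
  ring

theorem hasLineDerivAt_breg_left {z : Euc d} (hφ : HasGradientAt φ (φ' z) z) (w v : Euc d) :
    HasLineDerivAt ℝ (fun u => Breg φ φ' u w) ⟪φ' z - φ' w, v⟫ z v := by
  have hlin : HasDerivAt (fun t : ℝ => φ w + ⟪φ' w, z - w⟫ + t * ⟪φ' w, v⟫) ⟪φ' w, v⟫ 0 := by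
    simpa using (hasDerivAt_mul_const ⟪φ' w, v⟫).const_add (φ w + ⟪φ' w, z - w⟫)
  unfold HasLineDerivAt
  convert (hφ.hasLineDerivAt v).sub hlin using 1
  · funext t
    simp only [Breg, Pi.sub_apply, add_sub_right_comm z, inner_add_right, inner_smul_right]
    ring
  · rw [inner_sub_left]

theorem breg_prox_three_point {C : Set (Euc d)} {h : Euc d → ℝ} (hh : ConvexOn ℝ C h)
    (hφ : ∀ z, HasGradientAt φ (φ' z) z) (b : Euc d) (γ : ℝ) {w z : Euc d} (hz : z ∈ C)
    (hmax : ∀ y ∈ C, -h y + ⟪b, y⟫ - γ * Breg φ φ' y w ≤ -h z + ⟪b, z⟫ - γ * Breg φ φ' z w)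
    {y : Euc d} (hy : y ∈ C) :
    -h y + ⟪b, y⟫ - γ * Breg φ φ' y w ≤
      -h z + ⟪b, z⟫ - γ * Breg φ φ' z w - γ * Breg φ φ' y z := by
  have hmin : IsMinOn ((fun u => h u - ⟪b, u⟫) + fun u => γ * Breg φ φ' u w) C z :=
    fun u hu => by simp only [mem_ofPred_eq, Pi.add_apply]; linarith [hmax u hu]
  have hconv : ConvexOn ℝ C (fun u => h u - ⟪b, u⟫) := hh.sub ((innerₛₗ ℝ b).concaveOn hh.1)
  have hopt : h z - ⟪b, z⟫ ≤ h y - ⟪b, y⟫ + γ * ⟪φ' z - φ' w, y - z⟫ :=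
    hmin.le_add_of_hasLineDerivAt hconv hz hy
      ((hasLineDerivAt_breg_left (hφ z) w (y - z)).const_mul γ)
  rw [breg_eq_breg_add_breg_add_inner φ φ' w y z]
  linarith

theorem breg_const_mul (c : ℝ) (x y : Euc d) :
    Breg (fun z => c * φ z) (fun z => c • φ' z) x y = c * Breg φ φ' x y := by
  simp only [Breg, real_inner_smul_left]
  ring

theorem breg_half_mul_sq_norm (ϱ : ℝ) (x y : Euc d) :
    Breg (fun z => ϱ / 2 * ‖z‖ ^ 2) (fun z => ϱ • z) x y = ϱ / 2 * ‖x - y‖ ^ 2 := by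
  simp only [Breg, real_inner_smul_left, norm_sub_sq_real, inner_sub_right,
    real_inner_self_eq_norm_sq, real_inner_comm x y]
  ring

theorem breg_le_breg_of_convexOn_sub (hφ : ∀ z, HasGradientAt φ (φ' z) z)
    (hχ : ∀ z, HasGradientAt χ (χ' z) z) (hcv : ConvexOn ℝ univ (fun z => φ z - χ z))
    (x y : Euc d) : Breg χ χ' x y ≤ Breg φ φ' x y := by
  have hd : HasLineDerivAt ℝ (fun z => φ z - χ z) (⟪φ' y, x - y⟫ - ⟪χ' y, x - y⟫) y (x - y) :=
    ((hφ y).hasLineDerivAt (x - y)).sub ((hχ y).hasLineDerivAt (x - y))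
  have := hcv.le_sub_of_hasLineDerivAt (mem_univ y) (mem_univ x) hd
  simp only [Breg]
  linarith

theorem half_mul_sq_norm_le_breg {ϱ : ℝ} (hφ : ∀ z, HasGradientAt φ (φ' z) z)
    (hsc : ConvexOn ℝ univ (fun z => φ z - ϱ / 2 * ‖z‖ ^ 2)) (x y : Euc d) :
    ϱ / 2 * ‖x - y‖ ^ 2 ≤ Breg φ φ' x y := by
  rw [← breg_half_mul_sq_norm]
  exact breg_le_breg_of_convexOn_sub hφ (hasGradientAt_half_mul_sq_norm ϱ) hsc x y

theorem breg_le_const_mul_breg {c : ℝ} (hφ : ∀ z, HasGradientAt φ (φ' z) z)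
    (hχ : ∀ z, HasGradientAt χ (χ' z) z) (hcv : ConvexOn ℝ univ (fun z => c * φ z - χ z))
    (x y : Euc d) : Breg χ χ' x y ≤ c * Breg φ φ' x y := by
  rw [← breg_const_mul]
  exact breg_le_breg_of_convexOn_sub (fun z => (hφ z).const_mul c) hχ hcv x y

end Bregman

section Operator

variable {E F : Type*} [NormedAddCommGroup E] [InnerProductSpace ℝ E] [NormedAddCommGroup F]
  [InnerProductSpace ℝ F]

theorem ContinuousLinearMap.inner_apply_le_of_sq_opNorm_le (A : E →L[ℝ] F) {a b : ℝ}
    (ha : 0 < a) (hA : ‖A‖ ^ 2 ≤ a * b) (u : E) (v : F) :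
    ⟪A u, v⟫ ≤ a / 2 * ‖u‖ ^ 2 + b / 2 * ‖v‖ ^ 2 := by
  have hcs : ⟪A u, v⟫ ≤ ‖A‖ * ‖u‖ * ‖v‖ :=
    (real_inner_le_norm _ _).trans (mul_le_mul_of_nonneg_right (A.le_opNorm u) (norm_nonneg v))
  nlinarith [sq_nonneg (a * ‖u‖ - ‖A‖ * ‖v‖), mul_le_mul_of_nonneg_right hA (sq_nonneg ‖v‖)]

theorem ContinuousLinearMap.sq_opNorm_le_of_stepsize [CompleteSpace E] [CompleteSpace F]
    {A : E →L[ℝ] F} {ϱ μ γ α L : ℝ} (hϱμ : 0 < ϱ * μ) (hL : 0 < L)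
    (hLle : L ≤ ϱ * μ / (α * ‖(ContinuousLinearMap.adjoint A).comp A‖))
    (hαϱγ : 1 ≤ α * ϱ * γ) :
    ‖A‖ ^ 2 ≤ ϱ * μ / L * (ϱ * γ) := by
  rw [ContinuousLinearMap.norm_adjoint_comp_self] at hLle
  have hD : 0 < α * (‖A‖ * ‖A‖) := (div_pos_iff_of_pos_left hϱμ).mp (hL.trans_le hLle)
  have hDle : α * (‖A‖ * ‖A‖) ≤ ϱ * μ / L := (le_div_comm₀ hL hD).mp hLle
  have hα : 0 < α := pos_of_mul_pos_left hD (by positivity)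
  have hϱγ : 0 < ϱ * γ := by nlinarith
  nlinarith

end Operator

theorem inner_apply_sub_le_breg_add_breg {n m : ℕ} (A : Euc n →L[ℝ] Euc m) {γ μ ϱ α L : ℝ}
    (hγ : 0 < γ) (hμ : 0 < μ) (hϱ : 0 < ϱ) (hαϱγ : 1 ≤ α * ϱ * γ) (hL : 0 < L)
    (hLle : L ≤ ϱ * μ / (α * ‖(ContinuousLinearMap.adjoint A).comp A‖))
    {φ : Euc m → ℝ} {φ' : Euc m → Euc m} (hφ : ∀ z, HasGradientAt φ (φ' z) z)
    (hφsc : ConvexOn ℝ univ (fun z => φ z - ϱ / 2 * ‖z‖ ^ 2))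
    {ψ φn : Euc n → ℝ} {ψ' φn' : Euc n → Euc n} (hψ : ∀ z, HasGradientAt ψ (ψ' z) z)
    (hφn : ∀ z, HasGradientAt φn (φn' z) z)
    (hφnsc : ConvexOn ℝ univ (fun z => φn z - ϱ / 2 * ‖z‖ ^ 2))
    (hLψφn : ConvexOn ℝ univ (fun z => L * ψ z - φn z)) (x x' : Euc n) (y y' : Euc m) :
    ⟪A (x - x'), y - y'⟫ ≤ μ * Breg ψ ψ' x x' + γ * Breg φ φ' y y' := by
  have hyoung := A.inner_apply_le_of_sq_opNorm_le (by positivity)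
    (A.sq_opNorm_le_of_stepsize (mul_pos hϱ hμ) hL hLle hαϱγ) (x - x') (y - y')
  have hψx : ϱ / 2 * ‖x - x'‖ ^ 2 ≤ L * Breg ψ ψ' x x' :=
    (half_mul_sq_norm_le_breg hφn hφnsc x x').trans (breg_le_const_mul_breg hψ hφn hLψφn x x')
  have hφy := half_mul_sq_norm_le_breg hφ hφsc y y'
  have hxterm : ϱ * μ / L / 2 * ‖x - x'‖ ^ 2 ≤ μ * Breg ψ ψ' x x' := by
    rw [div_div, div_mul_eq_mul_div, div_le_iff₀ (by positivity)]
    nlinarith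
  have hyterm : ϱ * γ / 2 * ‖y - y'‖ ^ 2 ≤ γ * Breg φ φ' y y' := by nlinarith
  linarith

theorem spida_combined_descent_general {n m : ℕ}
    (X : Set (Euc n)) (Y : Set (Euc m))
    (hXcv : Convex ℝ X)
    (hYcv : Convex ℝ Y)
    (f : Euc n → ℝ) (g : Euc m → ℝ)
    (hf : ConvexOn ℝ Set.univ f)
    (hg : ConvexOn ℝ Set.univ g)
    (A : Euc n →L[ℝ] Euc m)
    (γ μ : ℝ) (hγ : 0 < γ) (hμ : 0 < μ)
    (φ : Euc m → ℝ) (φ' : Euc m → Euc m)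
    (hφg : ∀ z, HasGradientAt φ (φ' z) z)
    (ψ : Euc n → ℝ) (ψ' : Euc n → Euc n)
    (hψg : ∀ z, HasGradientAt ψ (ψ' z) z)
    (xk x1 : Euc n) (yk yt1 y1 : Euc m)
    (hyt1mem : yt1 ∈ Y)
    (hyt1max : ∀ y ∈ Y, -g y + ⟪A xk, y⟫ - γ * Breg φ φ' y yk ≤
      -g yt1 + ⟪A xk, yt1⟫ - γ * Breg φ φ' yt1 yk)
    (hx1mem : x1 ∈ X)
    (hx1min : ∀ x ∈ X, f x1 + ⟪A x1, yt1⟫ + μ * Breg ψ ψ' x1 xk ≤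
      f x + ⟪A x, yt1⟫ + μ * Breg ψ ψ' x xk)
    (hy1mem : y1 ∈ Y)
    (hy1max : ∀ y ∈ Y, -g y + ⟪A x1, y⟫ - γ * Breg φ φ' y yk ≤
      -g y1 + ⟪A x1, y1⟫ - γ * Breg φ φ' y1 yk)
    (ϱ α : ℝ) (hϱ : 0 < ϱ)
    (hφsc : ConvexOn ℝ Set.univ (fun z => φ z - ϱ / 2 * ‖z‖ ^ 2))
    (hαϱγ : 1 ≤ α * ϱ * γ)
    (φn : Euc n → ℝ) (φn' : Euc n → Euc n)
    (hφng : ∀ z, HasGradientAt φn (φn' z) z)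
    (hφnsc : ConvexOn ℝ Set.univ (fun z => φn z - ϱ / 2 * ‖z‖ ^ 2))
    (L0 : ℝ) (hL0pos : 0 < L0)
    (hL0le : L0 ≤ ϱ * μ / (α * ‖(ContinuousLinearMap.adjoint A).comp A‖))
    (hLψφ : ConvexOn ℝ Set.univ (fun z => L0 * ψ z - φn z))
    :
    ∀ x ∈ X, ∀ y ∈ Y,
      Lag f g A x1 y - Lag f g A x yt1 ≤
        γ * Breg φ φ' y yk - γ * Breg φ φ' y y1
          + μ * Breg ψ ψ' x xk - μ * Breg ψ ψ' x x1 := by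
  intro x hx y hy
  have hgY : ConvexOn ℝ Y g := hg.subset (subset_univ Y) hYcv
  have hy1 := breg_prox_three_point hgY hφg (A x1) γ hy1mem hy1max hy
  have hyt1 := breg_prox_three_point hgY hφg (A xk) γ hyt1mem hyt1max hy1mem
  -- the `x`-update maximizes `-f + ⟪-A† ỹ^{k+1}, ·⟫ - μ B_ψ(·, x^k)`
  have hadj : ∀ u, ⟪-(ContinuousLinearMap.adjoint A yt1), u⟫ = -⟪A u, yt1⟫ := fun u => by
    rw [inner_neg_left, ContinuousLinearMap.adjoint_inner_left, real_inner_comm]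
  have hx1 := breg_prox_three_point (hf.subset (subset_univ X) hXcv) hψg
    (-(ContinuousLinearMap.adjoint A yt1)) μ hx1mem
    (fun u hu => by rw [hadj, hadj]; linarith [hx1min u hu]) hx
  rw [hadj, hadj] at hx1
  have hcross := inner_apply_sub_le_breg_add_breg A hγ hμ hϱ hαϱγ hL0pos hL0le hφg hφsc hψg
    hφng hφnsc hLψφ x1 xk y1 yt1
  have hcross_eq : ⟪A (x1 - xk), y1 - yt1⟫ =
      ⟪A x1, y1⟫ - ⟪A x1, yt1⟫ - ⟪A xk, y1⟫ + ⟪A xk, yt1⟫ := by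
    simp only [map_sub, inner_sub_left, inner_sub_right]; ring
  have hyt1_breg : 0 ≤ γ * Breg φ φ' yt1 yk :=
    mul_nonneg hγ.le (le_trans (by positivity) (half_mul_sq_norm_le_breg hφg hφsc yt1 yk))
  simp only [Lag]
  linarith

/-- combined one-iteration inequality of SPIDA under the standing
assumption. -/
theorem spida_combined_descent {n m : ℕ}
    (X : Set (Euc n)) (Y : Set (Euc m))
    (hXne : X.Nonempty) (hXcl : IsClosed X) (hXcv : Convex ℝ X)
    (hYne : Y.Nonempty) (hYcl : IsClosed Y) (hYcv : Convex ℝ Y)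
    (f : Euc n → ℝ) (g : Euc m → ℝ)
    (hf : ConvexOn ℝ Set.univ f) (hflsc : LowerSemicontinuous f)
    (hg : ConvexOn ℝ Set.univ g) (hglsc : LowerSemicontinuous g)
    (A : Euc n →L[ℝ] Euc m)
    (γ μ : ℝ) (hγ : 0 < γ) (hμ : 0 < μ)
    (φ : Euc m → ℝ) (φ' : Euc m → Euc m)
    (hφg : ∀ z, HasGradientAt φ (φ' z) z) (hφcv : ConvexOn ℝ Set.univ φ)
    (ψ : Euc n → ℝ) (ψ' : Euc n → Euc n)
    (hψg : ∀ z, HasGradientAt ψ (ψ' z) z) (hψcv : ConvexOn ℝ Set.univ ψ)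
    (xk x1 : Euc n) (yk yt1 y1 : Euc m)
    (hxk : xk ∈ X) (hyk : yk ∈ Y)
    (hyt1mem : yt1 ∈ Y)
    (hyt1max : ∀ y ∈ Y, -g y + ⟪A xk, y⟫ - γ * Breg φ φ' y yk ≤
      -g yt1 + ⟪A xk, yt1⟫ - γ * Breg φ φ' yt1 yk)
    (hx1mem : x1 ∈ X)
    (hx1min : ∀ x ∈ X, f x1 + ⟪A x1, yt1⟫ + μ * Breg ψ ψ' x1 xk ≤
      f x + ⟪A x, yt1⟫ + μ * Breg ψ ψ' x xk)
    (hy1mem : y1 ∈ Y)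
    (hy1max : ∀ y ∈ Y, -g y + ⟪A x1, y⟫ - γ * Breg φ φ' y yk ≤
      -g y1 + ⟪A x1, y1⟫ - γ * Breg φ φ' y1 yk)
    (ϱ α : ℝ) (hϱ : 0 < ϱ) (hα : 0 < α)
    (hφsc : ConvexOn ℝ Set.univ (fun z => φ z - ϱ / 2 * ‖z‖ ^ 2))
    (hαϱγ : 1 ≤ α * ϱ * γ)
    (φn : Euc n → ℝ) (φn' : Euc n → Euc n)
    (hφng : ∀ z, HasGradientAt φn (φn' z) z)
    (hφnsc : ConvexOn ℝ Set.univ (fun z => φn z - ϱ / 2 * ‖z‖ ^ 2))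
    (L0 : ℝ) (hL0pos : 0 < L0)
    (hL0le : L0 ≤ ϱ * μ / (α * ‖(ContinuousLinearMap.adjoint A).comp A‖))
    (hLψφ : ConvexOn ℝ Set.univ (fun z => L0 * ψ z - φn z))
    :
    ∀ x ∈ X, ∀ y ∈ Y,
      Lag f g A x1 y - Lag f g A x yt1 ≤
        γ * Breg φ φ' y yk - γ * Breg φ φ' y y1
          + μ * Breg ψ ψ' x xk - μ * Breg ψ ψ' x x1 :=
  spida_combined_descent_general X Y hXcv hYcv f g hf hg A γ μ hγ hμ φ φ' hφg ψ ψ' hψg xk x1 yk yt1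
    y1 hyt1mem hyt1max hx1mem hx1min hy1mem hy1max ϱ α hϱ hφsc hαϱγ φn φn' hφng hφnsc L0 hL0pos
    hL0le hLψφ
end
end

section
/- (Fejér monotonicity.) Under the standing assumption, let (x^{k+1}, ỹ^{k+1}, y^{k+1}) be produced by one SPIDA iteration from (x^k, y^k), and let (x*, y*) be a saddle point of L. Then 0 ≤ γ B_φ(y*, y^{k+1}) + μ B_ψ(x*, x^{k+1}) ≤ γ B_φ(y*, y^k) + μ B_ψ(x*, x^k); in particular, along the SPIDA sequence the quantity γ B_φ(y*, y^k) + μ B_ψ(x*, x^k) is nonincreasing in k. -/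
noncomputable section
open scoped RealInnerProductSpace
open Filter

/-!
Each SPIDA update is a Bregman proximal step, so the three-point inequality compares it with a
test point: `ỹ^{k+1}` with `y^{k+1}`, `x^{k+1}` with `x*`, and `y^{k+1}` with `y*`. Adding these
three inequalities to the saddle-point inequality at `(x^{k+1}, ỹ^{k+1})` leaves the cross term
`⟪A (x^{k+1} - x^k), y^{k+1} - ỹ^{k+1}⟫`. Since `ψ` is `ϱ / L`-strongly convex, `φ` is
`ϱ`-strongly convex and the step sizes force `‖A‖² ≤ (ϱ / L) μ · ϱ γ`, Cauchy–Schwarz and Young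
bound that term by `μ B_ψ(x^{k+1}, x^k) + γ B_φ(y^{k+1}, ỹ^{k+1})`.
-/

open Set InnerProductSpace

section Convexity

variable {E : Type*} [NormedAddCommGroup E] [InnerProductSpace ℝ E] {s : Set E} {f : E → ℝ}

theorem StrongConvexOn.of_convexOn_mul_sub {m L : ℝ} {φ : E → ℝ} (hφ : StrongConvexOn s m φ)
    (h : ConvexOn ℝ s fun z => L * f z - φ z) (hL : 0 < L) : StrongConvexOn s (m / L) f := by
  rw [strongConvexOn_iff_convex] at hφ ⊢
  refine ((h.add hφ).smul (inv_nonneg.mpr hL.le)).congr fun z _ => ?_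
  simp only [Pi.add_apply, smul_eq_mul]
  field_simp
  ring

variable [CompleteSpace E] {f' x y : E}

theorem ConvexOn.add_inner_le_of_hasGradientAt (hf : ConvexOn ℝ s f) (hx : x ∈ s) (hy : y ∈ s)
    (hf' : HasGradientAt f f' y) : f y + ⟪f', x - y⟫ ≤ f x := by
  have hline : ConvexOn ℝ (AffineMap.lineMap y x ⁻¹' s) (f ∘ AffineMap.lineMap (k := ℝ) y x) :=
    hf.comp_affineMap _
  have hderiv : HasDerivAt (f ∘ AffineMap.lineMap (k := ℝ) y x) ⟪f', x - y⟫ 0 := by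
    have hf'0 : HasFDerivAt f (toDual ℝ E f') (AffineMap.lineMap y x (0 : ℝ)) := by
      simpa using hf'.hasFDerivAt
    simpa using hf'0.comp_hasDerivAt (0 : ℝ) AffineMap.hasDerivAt_lineMap
  have := hline.le_slope_of_hasDerivAt (by simpa) (by simpa) one_pos hderiv
  simp only [slope_def_field, Function.comp_apply, AffineMap.lineMap_apply_one,
    AffineMap.lineMap_apply_zero, sub_zero, div_one] at this
  linarith

theorem StrongConvexOn.add_inner_add_le_of_hasGradientAt {m : ℝ} (hf : StrongConvexOn s m f)
    (hx : x ∈ s) (hy : y ∈ s) (hf' : HasGradientAt f f' y) :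
    f y + ⟪f', x - y⟫ + m / 2 * ‖x - y‖ ^ 2 ≤ f x := by
  have hgrad : HasGradientAt (fun z => f z - m / 2 * ‖z‖ ^ 2) (f' - m • y) y := by
    rw [hasGradientAt_iff_hasFDerivAt]
    refine (hf'.hasFDerivAt.sub
      ((hasStrictFDerivAt_norm_sq y).hasFDerivAt.const_mul (m / 2))).congr_fderiv ?_
    ext v
    simp only [sub_apply, toDual_apply_apply, smul_apply,
      coe_innerSL_apply, nsmul_eq_mul, Nat.cast_ofNat, smul_eq_mul, map_sub, map_smul,
      sub_right_inj]
    ring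
  have := (strongConvexOn_iff_convex.mp hf).add_inner_le_of_hasGradientAt hx hy hgrad
  rw [inner_sub_left, real_inner_smul_left, inner_sub_right, inner_sub_right,
    real_inner_self_eq_norm_sq] at this
  rw [norm_sub_sq_real, inner_sub_right, real_inner_comm y x]
  linarith

end Convexity

theorem IsMinOn.le_add_of_convexOn_of_hasFDerivAt {F : Type*} [NormedAddCommGroup F]
    [NormedSpace ℝ F] {s : Set F} {c D : F → ℝ} {D' : F →L[ℝ] ℝ} {a x : F}
    (hmin : IsMinOn (fun z => c z + D z) s a) (hc : ConvexOn ℝ s c) (ha : a ∈ s) (hx : x ∈ s)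
    (hD : HasFDerivAt D D' a) : c a ≤ c x + D' (x - a) := by
  set q : ℝ → ℝ := fun t => D (AffineMap.lineMap a x t) + t * (c x - c a)
  have hq : HasDerivAt q (D' (x - a) + (c x - c a)) 0 := by
    have hD0 : HasFDerivAt D D' (AffineMap.lineMap a x (0 : ℝ)) := by simpa using hD
    exact (hD0.comp_hasDerivAt (0 : ℝ) AffineMap.hasDerivAt_lineMap).add
      (by simpa using (hasDerivAt_id (0 : ℝ)).mul_const (c x - c a))
  have hloc : IsLocalMinOn q (Icc 0 1) 0 := by
    refine Filter.mem_of_superset self_mem_nhdsWithin fun t ht => ?_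
    have hseg := hc.2 ha hx (sub_nonneg.mpr ht.2) ht.1 (sub_add_cancel 1 t)
    rw [← AffineMap.lineMap_apply_module] at hseg
    have := isMinOn_iff.mp hmin _ (hc.1.lineMap_mem ha hx ⟨ht.1, ht.2⟩)
    simp only [smul_eq_mul] at hseg this
    simp only [mem_ofPred_eq, q, AffineMap.lineMap_apply_zero, zero_mul, add_zero]
    linarith
  have hcone : (1 : ℝ) ∈ posTangentConeAt (Icc 0 1) 0 :=
    mem_posTangentConeAt_of_segment_subset (by simp [segment_eq_Icc])
  have := hloc.hasFDerivWithinAt_nonneg hq.hasFDerivAt.hasFDerivWithinAt hcone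
  rw [map_sub]
  simp only [map_sub, ContinuousLinearMap.toSpanSingleton_apply, smul_eq_mul, one_mul] at this
  linarith

section Bregman

variable {d : ℕ} {φ : Euc d → ℝ} {φ' : Euc d → Euc d}

theorem StrongConvexOn.mul_sq_norm_sub_le_breg {s : Set (Euc d)} {m : ℝ} {x y : Euc d}
    (hφ : StrongConvexOn s m φ) (hx : x ∈ s) (hy : y ∈ s) (hφ' : HasGradientAt φ (φ' y) y) :
    m / 2 * ‖x - y‖ ^ 2 ≤ Breg φ φ' x y := by
  have := hφ.add_inner_add_le_of_hasGradientAt hx hy hφ'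
  rw [Breg]
  linarith

theorem breg_three_point (x a w : Euc d) :
    Breg φ φ' x w - Breg φ φ' a w - Breg φ φ' x a = ⟪φ' a - φ' w, x - a⟫ := by
  simp only [Breg, inner_sub_left, inner_sub_right]
  ring

theorem hasGradientAt_breg_left {a : Euc d} (hφ' : HasGradientAt φ (φ' a) a) (w : Euc d) :
    HasGradientAt (fun z => Breg φ φ' z w) (φ' a - φ' w) a := by
  rw [hasGradientAt_iff_hasFDerivAt, map_sub]
  have hlin := (toDual ℝ (Euc d) (φ' w)).hasFDerivAt (x := a)
  refine ((hφ'.hasFDerivAt.sub_const (φ w)).sub (hlin.sub_const (toDual ℝ (Euc d) (φ' w) w)))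
    |>.congr_of_eventuallyEq (Eventually.of_forall fun z => ?_)
  simp only [Breg, Pi.sub_apply, toDual_apply_apply, inner_sub_right]

theorem IsMinOn.three_point_breg {s : Set (Euc d)} {c : Euc d → ℝ} {μ : ℝ} {a w x : Euc d}
    (hmin : IsMinOn (fun z => c z + μ * Breg φ φ' z w) s a) (hc : ConvexOn ℝ s c)
    (ha : a ∈ s) (hx : x ∈ s) (hφ' : HasGradientAt φ (φ' a) a) :
    c a + μ * Breg φ φ' a w + μ * Breg φ φ' x a ≤ c x + μ * Breg φ φ' x w := by
  have hopt := hmin.le_add_of_convexOn_of_hasFDerivAt hc ha hx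
    ((hasGradientAt_breg_left hφ' w).hasFDerivAt.const_mul μ)
  have hident := breg_three_point (φ := φ) (φ' := φ') x a w
  simp only [smul_apply, toDual_apply_apply, smul_eq_mul] at hopt
  rw [← hident, mul_sub, mul_sub] at hopt
  linarith

end Bregman

section Coupling

variable {E F : Type*} [NormedAddCommGroup E] [InnerProductSpace ℝ E]
  [NormedAddCommGroup F] [InnerProductSpace ℝ F]

theorem two_mul_inner_apply_le (A : E →L[ℝ] F) {p q : ℝ} (hp : 0 < p) (hA : ‖A‖ ^ 2 ≤ p * q)
    (u : E) (v : F) : 2 * ⟪A u, v⟫ ≤ p * ‖u‖ ^ 2 + q * ‖v‖ ^ 2 := by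
  have hcs : ⟪A u, v⟫ ≤ ‖A‖ * ‖u‖ * ‖v‖ :=
    (real_inner_le_norm _ _).trans (mul_le_mul_of_nonneg_right (A.le_opNorm u) (norm_nonneg v))
  -- `p (p a² + q b² - 2 k a b) = (p a - k b)² + (p q - k²) b²` with `k, a, b = ‖A‖, ‖u‖, ‖v‖`
  have hsq := sq_nonneg (p * ‖u‖ - ‖A‖ * ‖v‖)
  have hrest := mul_le_mul_of_nonneg_right hA (sq_nonneg ‖v‖)
  have : p * (2 * (‖A‖ * ‖u‖ * ‖v‖)) ≤ p * (p * ‖u‖ ^ 2 + q * ‖v‖ ^ 2) := by nlinarith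
  linarith [le_of_mul_le_mul_left this hp]

variable [CompleteSpace E] [CompleteSpace F]

theorem sq_opNorm_le_of_le_div {A : E →L[ℝ] F} {ϱ μ γ α L : ℝ} (hϱμ : 0 < ϱ * μ)
    (hϱγ : 0 ≤ ϱ * γ) (hL : 0 < L)
    (hLle : L ≤ ϱ * μ / (α * ‖(ContinuousLinearMap.adjoint A).comp A‖))
    (hαϱγ : 1 ≤ α * ϱ * γ) : ‖A‖ ^ 2 ≤ ϱ / L * μ * (ϱ * γ) := by
  rw [ContinuousLinearMap.norm_adjoint_comp_self] at hLle
  have hden : 0 < α * (‖A‖ * ‖A‖) := (div_pos_iff_of_pos_left hϱμ).mp (hL.trans_le hLle)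
  have hLA : L * (α * (‖A‖ * ‖A‖)) ≤ ϱ * μ := (le_div_iff₀ hden).mp hLle
  rw [div_mul_eq_mul_div, div_mul_eq_mul_div, le_div_iff₀ hL]
  have hscale : ‖A‖ ^ 2 * L * 1 ≤ ‖A‖ ^ 2 * L * (α * ϱ * γ) :=
    mul_le_mul_of_nonneg_left hαϱγ (by positivity)
  nlinarith [mul_le_mul_of_nonneg_right hLA hϱγ]

end Coupling

theorem spida_fejer_monotone_general {n m : ℕ}
    (X : Set (Euc n)) (Y : Set (Euc m))
    (hXcv : Convex ℝ X)
    (hYcv : Convex ℝ Y)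
    (f : Euc n → ℝ) (g : Euc m → ℝ)
    (hf : ConvexOn ℝ Set.univ f)
    (hg : ConvexOn ℝ Set.univ g)
    (A : Euc n →L[ℝ] Euc m)
    (γ μ : ℝ) (hγ : 0 < γ) (hμ : 0 < μ)
    (φ : Euc m → ℝ) (φ' : Euc m → Euc m)
    (hφg : ∀ z, HasGradientAt φ (φ' z) z)
    (ψ : Euc n → ℝ) (ψ' : Euc n → Euc n)
    (hψg : ∀ z, HasGradientAt ψ (ψ' z) z)
    (xk x1 : Euc n) (yk yt1 y1 : Euc m)
    (hyt1mem : yt1 ∈ Y)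
    (hyt1max : ∀ y ∈ Y, -g y + ⟪A xk, y⟫ - γ * Breg φ φ' y yk ≤
      -g yt1 + ⟪A xk, yt1⟫ - γ * Breg φ φ' yt1 yk)
    (hx1mem : x1 ∈ X)
    (hx1min : ∀ x ∈ X, f x1 + ⟪A x1, yt1⟫ + μ * Breg ψ ψ' x1 xk ≤
      f x + ⟪A x, yt1⟫ + μ * Breg ψ ψ' x xk)
    (hy1mem : y1 ∈ Y)
    (hy1max : ∀ y ∈ Y, -g y + ⟪A x1, y⟫ - γ * Breg φ φ' y yk ≤
      -g y1 + ⟪A x1, y1⟫ - γ * Breg φ φ' y1 yk)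
    (ϱ α : ℝ) (hϱ : 0 < ϱ)
    (hφsc : ConvexOn ℝ Set.univ (fun z => φ z - ϱ / 2 * ‖z‖ ^ 2))
    (hαϱγ : 1 ≤ α * ϱ * γ)
    (φn : Euc n → ℝ)
    (hφnsc : ConvexOn ℝ Set.univ (fun z => φn z - ϱ / 2 * ‖z‖ ^ 2))
    (L0 : ℝ) (hL0pos : 0 < L0)
    (hL0le : L0 ≤ ϱ * μ / (α * ‖(ContinuousLinearMap.adjoint A).comp A‖))
    (hLψφ : ConvexOn ℝ Set.univ (fun z => L0 * ψ z - φn z))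
    (xs : Euc n) (ys : Euc m) (hxs : xs ∈ X) (hys : ys ∈ Y)
    (hsaddle : ∀ xx ∈ X, ∀ yy ∈ Y,
      Lag f g A xs yy ≤ Lag f g A xs ys ∧ Lag f g A xs ys ≤ Lag f g A xx ys) :
    0 ≤ γ * Breg φ φ' ys y1 + μ * Breg ψ ψ' xs x1 ∧
      γ * Breg φ φ' ys y1 + μ * Breg ψ ψ' xs x1 ≤
        γ * Breg φ φ' ys yk + μ * Breg ψ ψ' xs xk := by
  have hφ : StrongConvexOn univ ϱ φ := strongConvexOn_iff_convex.mpr hφsc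
  have hψ : StrongConvexOn univ (ϱ / L0) ψ :=
    (strongConvexOn_iff_convex.mpr hφnsc).of_convexOn_mul_sub hLψφ hL0pos
  have hBφ (u v) : ϱ / 2 * ‖u - v‖ ^ 2 ≤ Breg φ φ' u v :=
    hφ.mul_sq_norm_sub_le_breg (mem_univ u) (mem_univ v) (hφg v)
  have hBψ (u v) : ϱ / L0 / 2 * ‖u - v‖ ^ 2 ≤ Breg ψ ψ' u v :=
    hψ.mul_sq_norm_sub_le_breg (mem_univ u) (mem_univ v) (hψg v)
  have hBφ_nonneg (u v) : 0 ≤ Breg φ φ' u v := (hBφ u v).trans' (by positivity)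
  refine ⟨add_nonneg (mul_nonneg hγ.le (hBφ_nonneg ys y1))
    (mul_nonneg hμ.le ((hBψ xs x1).trans' (by positivity))), ?_⟩
  have hcY (x : Euc n) : ConvexOn ℝ Y fun y => g y - ⟪A x, y⟫ :=
    (hg.sub ((innerₛₗ ℝ (A x)).concaveOn convex_univ)).subset (subset_univ Y) hYcv
  have hcX : ConvexOn ℝ X fun x => f x + ⟪yt1, A x⟫ :=
    (hf.add (((innerₛₗ ℝ yt1).comp A.toLinearMap).convexOn convex_univ)).subset
      (subset_univ X) hXcv
  have hstep_yt := IsMinOn.three_point_breg (μ := γ) (w := yk) (isMinOn_iff.mpr fun y hy => by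
    linarith [hyt1max y hy]) (hcY xk) hyt1mem hy1mem (hφg yt1)
  have hstep_x := IsMinOn.three_point_breg (μ := μ) (w := xk) (isMinOn_iff.mpr fun x hx => by
    linarith [hx1min x hx, real_inner_comm yt1 (A x), real_inner_comm yt1 (A x1)])
    hcX hx1mem hxs (hψg x1)
  have hstep_y := IsMinOn.three_point_breg (μ := γ) (w := yk) (isMinOn_iff.mpr fun y hy => by
    linarith [hy1max y hy]) (hcY x1) hy1mem hys (hφg y1)
  obtain ⟨hsad_y, hsad_x⟩ := hsaddle x1 hx1mem yt1 hyt1mem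
  simp only [Lag] at hsad_y hsad_x
  have hcross := two_mul_inner_apply_le A (by positivity)
    (sq_opNorm_le_of_le_div (by positivity) (by positivity) hL0pos hL0le hαϱγ)
    (x1 - xk) (y1 - yt1)
  simp only [map_sub, inner_sub_left, inner_sub_right] at hcross
  linarith [mul_le_mul_of_nonneg_left (hBψ x1 xk) hμ.le,
    mul_le_mul_of_nonneg_left (hBφ y1 yt1) hγ.le, mul_nonneg hγ.le (hBφ_nonneg yt1 yk),
    real_inner_comm yt1 (A xs), real_inner_comm yt1 (A x1)]

/-- Fejér monotonicity of SPIDA with respect to the Bregman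
distance to a saddle point. -/
theorem spida_fejer_monotone {n m : ℕ}
    (X : Set (Euc n)) (Y : Set (Euc m))
    (hXne : X.Nonempty) (hXcl : IsClosed X) (hXcv : Convex ℝ X)
    (hYne : Y.Nonempty) (hYcl : IsClosed Y) (hYcv : Convex ℝ Y)
    (f : Euc n → ℝ) (g : Euc m → ℝ)
    (hf : ConvexOn ℝ Set.univ f) (hflsc : LowerSemicontinuous f)
    (hg : ConvexOn ℝ Set.univ g) (hglsc : LowerSemicontinuous g)
    (A : Euc n →L[ℝ] Euc m)
    (γ μ : ℝ) (hγ : 0 < γ) (hμ : 0 < μ)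
    (φ : Euc m → ℝ) (φ' : Euc m → Euc m)
    (hφg : ∀ z, HasGradientAt φ (φ' z) z) (hφcv : ConvexOn ℝ Set.univ φ)
    (ψ : Euc n → ℝ) (ψ' : Euc n → Euc n)
    (hψg : ∀ z, HasGradientAt ψ (ψ' z) z) (hψcv : ConvexOn ℝ Set.univ ψ)
    (xk x1 : Euc n) (yk yt1 y1 : Euc m)
    (hxk : xk ∈ X) (hyk : yk ∈ Y)
    (hyt1mem : yt1 ∈ Y)
    (hyt1max : ∀ y ∈ Y, -g y + ⟪A xk, y⟫ - γ * Breg φ φ' y yk ≤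
      -g yt1 + ⟪A xk, yt1⟫ - γ * Breg φ φ' yt1 yk)
    (hx1mem : x1 ∈ X)
    (hx1min : ∀ x ∈ X, f x1 + ⟪A x1, yt1⟫ + μ * Breg ψ ψ' x1 xk ≤
      f x + ⟪A x, yt1⟫ + μ * Breg ψ ψ' x xk)
    (hy1mem : y1 ∈ Y)
    (hy1max : ∀ y ∈ Y, -g y + ⟪A x1, y⟫ - γ * Breg φ φ' y yk ≤
      -g y1 + ⟪A x1, y1⟫ - γ * Breg φ φ' y1 yk)
    (ϱ α : ℝ) (hϱ : 0 < ϱ) (hα : 0 < α)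
    (hφsc : ConvexOn ℝ Set.univ (fun z => φ z - ϱ / 2 * ‖z‖ ^ 2))
    (hαϱγ : 1 ≤ α * ϱ * γ)
    (φn : Euc n → ℝ) (φn' : Euc n → Euc n)
    (hφng : ∀ z, HasGradientAt φn (φn' z) z)
    (hφnsc : ConvexOn ℝ Set.univ (fun z => φn z - ϱ / 2 * ‖z‖ ^ 2))
    (L0 : ℝ) (hL0pos : 0 < L0)
    (hL0le : L0 ≤ ϱ * μ / (α * ‖(ContinuousLinearMap.adjoint A).comp A‖))
    (hLψφ : ConvexOn ℝ Set.univ (fun z => L0 * ψ z - φn z))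
    (xs : Euc n) (ys : Euc m) (hxs : xs ∈ X) (hys : ys ∈ Y)
    (hsaddle : ∀ xx ∈ X, ∀ yy ∈ Y,
      Lag f g A xs yy ≤ Lag f g A xs ys ∧ Lag f g A xs ys ≤ Lag f g A xx ys) :
    0 ≤ γ * Breg φ φ' ys y1 + μ * Breg ψ ψ' xs x1 ∧
      γ * Breg φ φ' ys y1 + μ * Breg ψ ψ' xs x1 ≤
        γ * Breg φ φ' ys yk + μ * Breg ψ ψ' xs xk :=
  spida_fejer_monotone_general X Y hXcv hYcv f g hf hg A γ μ hγ hμ φ φ' hφg ψ ψ' hψg xk x1 yk yt1 y1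
    hyt1mem hyt1max hx1mem hx1min hy1mem hy1max ϱ α hϱ hφsc hαϱγ φn hφnsc L0 hL0pos hL0le hLψφ xs ys
    hxs hys hsaddle
end
end
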